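/- arXiv:1008.4673 — 6 statements merged into one kernel-verified Lean document; each statement's English description precedes it below -/
import Mathlib

section
/- Let G be a group and let ρ, ρ' : G → SL(2,ℂ) be two representations. If ρ is irreducible and χ_ρ = χ_{ρ'} (i.e. tr ρ(g) = tr ρ'(g) for all g ∈ G), then there exists A ∈ SL(2,ℂ) such that ρ'(g) = A ρ(g) A⁻¹ for all g ∈ G; in particular ρ' is also irreducible. -/
/-- `SL(2,ℂ)`. -/
abbrev SL2C := Matrix.SpecialLinearGroup (Fin 2) ℂ

/-- A representation `ρ : G → SL(2,ℂ)` is irreducible if no one-dimensional subspace of `ℂ²`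
is invariant under `ρ(g)` for all `g ∈ G`. -/
def IsIrreducibleRep {G : Type*} [Group G] (ρ : G →* SL2C) : Prop :=
  ¬ ∃ p : Submodule ℂ (Fin 2 → ℂ), Module.finrank ℂ p = 1 ∧
      ∀ g : G, ∀ x ∈ p, (ρ g : Matrix (Fin 2) (Fin 2) ℂ).mulVec x ∈ p

local notation "M2" => Matrix (Fin 2) (Fin 2) ℂ

lemma trace_mul_fin_two (X Y : M2) :
    Matrix.trace (X * Y) = X 0 0 * Y 0 0 + X 0 1 * Y 1 0 + X 1 0 * Y 0 1 + X 1 1 * Y 1 1 := by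
  simp [Matrix.trace_fin_two, Matrix.mul_apply, Fin.sum_univ_two]
  ring

lemma mul_entry00 (X Y : M2) : (X * Y) 0 0 = X 0 0 * Y 0 0 + X 0 1 * Y 1 0 := by
  simp [Matrix.mul_apply, Fin.sum_univ_two]

lemma mul_entry11 (X Y : M2) : (X * Y) 1 1 = X 1 0 * Y 0 1 + X 1 1 * Y 1 1 := by
  simp [Matrix.mul_apply, Fin.sum_univ_two]

/-- common eigenvector kills irreducibility -/

lemma sl2_inv_mul (A : SL2C) : (A⁻¹ : SL2C) * (A : M2) = 1 := by
  rw [← Matrix.SpecialLinearGroup.coe_mul, inv_mul_cancel, Matrix.SpecialLinearGroup.coe_one]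

lemma sl2_mul_inv (A : SL2C) : (A : M2) * (A⁻¹ : SL2C) = 1 := by
  rw [← Matrix.SpecialLinearGroup.coe_mul, mul_inv_cancel, Matrix.SpecialLinearGroup.coe_one]

lemma irr_of_conj {G : Type*} [Group G] (ρ ρ' : G →* SL2C) (A : SL2C)
    (hconj : ∀ g : G, ρ' g = A * ρ g * A⁻¹) (hirr : IsIrreducibleRep ρ) :
    IsIrreducibleRep ρ' := by
  rintro ⟨p, hp1, hp2⟩
  set B : M2 := ((A⁻¹ : SL2C) : M2) with hB
  let e : (Fin 2 → ℂ) ≃ₗ[ℂ] (Fin 2 → ℂ) :=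
    LinearEquiv.ofLinear (Matrix.mulVecLin B) (Matrix.mulVecLin (A : M2))
      (by rw [← Matrix.mulVecLin_mul, sl2_inv_mul, Matrix.mulVecLin_one])
      (by rw [← Matrix.mulVecLin_mul, sl2_mul_inv, Matrix.mulVecLin_one])
  refine hirr ⟨p.map (e : (Fin 2 → ℂ) →ₗ[ℂ] (Fin 2 → ℂ)), ?_, ?_⟩
  · rw [LinearEquiv.finrank_map_eq]; exact hp1
  · rintro g x ⟨y, hy, rfl⟩
    have hx : (e : (Fin 2 → ℂ) →ₗ[ℂ] (Fin 2 → ℂ)) y = B.mulVec y := rfl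
    rw [hx]
    have key : (ρ g : M2).mulVec (B.mulVec y) = B.mulVec ((ρ' g : M2).mulVec y) := by
      rw [Matrix.mulVec_mulVec, Matrix.mulVec_mulVec]
      have h1 : (ρ' g : M2) = (A : M2) * (ρ g : M2) * ((A⁻¹ : SL2C) : M2) := by
        rw [hconj g]; simp [Matrix.SpecialLinearGroup.coe_mul]
      rw [hB, h1]
      rw [show ((A⁻¹:SL2C):M2) * ((A:M2) * (ρ g : M2) * ((A⁻¹:SL2C):M2))
          = ((A⁻¹:SL2C) * (A:M2)) * (ρ g : M2) * ((A⁻¹:SL2C):M2) by simp [mul_assoc],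
        sl2_inv_mul, one_mul]
    rw [key]
    exact ⟨(ρ' g : M2).mulVec y, hp2 g y hy, rfl⟩

lemma diag_lemma (M : M2) (hdet : M.det = 1) (l₁ l₂ : ℂ)
    (hsum : l₁ + l₂ = Matrix.trace M) (hprod : l₁ * l₂ = 1) (hne : l₁ ≠ l₂) :
    ∃ P : M2, P.det = 1 ∧ M * P = P * !![l₁, 0; 0, l₂] := by
  obtain ⟨a, b, c, d, hM⟩ : ∃ a b c d : ℂ, M = !![a, b; c, d] :=
    ⟨M 0 0, M 0 1, M 1 0, M 1 1, Matrix.etaExpand_eq M ▸ rfl⟩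
  subst hM
  rw [Matrix.det_fin_two_of] at hdet
  rw [Matrix.trace_fin_two_of] at hsum
  have hd : l₂ - l₁ ≠ 0 := sub_ne_zero.mpr (Ne.symm hne)
  have hd' : l₁ - l₂ ≠ 0 := sub_ne_zero.mpr hne
  by_cases hb : b ≠ 0
  · obtain ⟨k, hk⟩ : ∃ k : ℂ, k * (b * (l₂ - l₁)) = 1 :=
      ⟨(b * (l₂ - l₁))⁻¹, inv_mul_cancel₀ (mul_ne_zero hb hd)⟩
    refine ⟨!![k * b, b; k * (l₁ - a), l₂ - a], ?_, ?_⟩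
    · rw [Matrix.det_fin_two_of]; linear_combination hk
    · ext i j
      fin_cases i <;> fin_cases j <;>
        simp [Matrix.mul_apply, Fin.sum_univ_two]
      · ring
      · ring
      · linear_combination (k * (-l₁)) * hsum + (-k) * hdet + k * hprod
      · linear_combination (-l₂) * hsum + (-1) * hdet + hprod
  · push_neg at hb; subst hb
    by_cases hc : c ≠ 0
    · obtain ⟨k, hk⟩ : ∃ k : ℂ, k * (c * (l₁ - l₂)) = 1 :=
        ⟨(c * (l₁ - l₂))⁻¹, inv_mul_cancel₀ (mul_ne_zero hc hd')⟩
      refine ⟨!![k * (l₁ - d), l₂ - d; k * c, c], ?_, ?_⟩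
      · rw [Matrix.det_fin_two_of]; linear_combination hk
      · ext i j
        fin_cases i <;> fin_cases j <;>
          simp [Matrix.mul_apply, Fin.sum_univ_two]
        · linear_combination (k * (-l₁)) * hsum + (-k) * hdet + k * hprod
        · linear_combination (-l₂) * hsum + (-1) * hdet + hprod
        · ring
        · ring
    · push_neg at hc; subst hc
      have ha : a = l₁ ∨ a = l₂ := by
        have h0 : (a - l₁) * (a - l₂) = 0 := by
          linear_combination (-a) * hsum - hdet + hprod
        rcases mul_eq_zero.mp h0 with h | h
        · exact Or.inl (sub_eq_zero.mp h)
        · exact Or.inr (sub_eq_zero.mp h)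
      rcases ha with ha | ha
      · have hdd : d = l₂ := by linear_combination (-1) * hsum - ha
        subst ha; subst hdd
        exact ⟨1, Matrix.det_one, by rw [mul_one, one_mul]⟩
      · have hdd : d = l₁ := by linear_combination (-1) * hsum - ha
        subst ha; subst hdd
        refine ⟨!![0, 1; -1, 0], by rw [Matrix.det_fin_two_of]; ring, ?_⟩
        ext i j
        fin_cases i <;> fin_cases j <;> simp [Matrix.mul_apply, Fin.sum_univ_two]

lemma not_irr_of_eigvec {G : Type*} [Group G] (ρ : G →* SL2C) (v : Fin 2 → ℂ) (hv : v ≠ 0)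
    (h : ∀ g, ∃ c : ℂ, (ρ g : M2).mulVec v = c • v) : ¬ IsIrreducibleRep ρ := by
  intro hirr
  refine hirr ⟨Submodule.span ℂ {v}, finrank_span_singleton hv, ?_⟩
  intro g x hx
  obtain ⟨c, hc⟩ := Submodule.mem_span_singleton.mp hx
  obtain ⟨e, he⟩ := h g
  rw [← hc, Matrix.mulVec_smul, he, smul_smul]
  exact Submodule.smul_mem _ _ (Submodule.mem_span_singleton_self v)

lemma exists_trace_sq_ne {G : Type*} [Group G] (ρ : G →* SL2C) (hirr : IsIrreducibleRep ρ) :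
    ∃ g : G, (Matrix.trace (ρ g : M2)) ^ 2 ≠ 4 := by
  by_contra hcon
  push_neg at hcon
  by_cases hpm : ∀ g : G, (ρ g : M2) = 1 ∨ (ρ g : M2) = -1
  · refine not_irr_of_eigvec ρ (Pi.single 0 1) ?_ (fun g => ?_) hirr
    · intro h0; have := congrFun h0 0; simp at this
    · rcases hpm g with h | h
      · exact ⟨1, by rw [h, Matrix.one_mulVec, one_smul]⟩
      · exact ⟨-1, by rw [h, Matrix.neg_mulVec, Matrix.one_mulVec, neg_smul, one_smul]⟩
  · push_neg at hpm
    obtain ⟨g₀, hX1, hXm1⟩ := hpm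
    set X : M2 := (ρ g₀ : M2) with hXdef
    have hdetX : X.det = 1 := (ρ g₀).2
    set ε : ℂ := Matrix.trace X / 2 with hεdef
    have hε2 : ε ^ 2 = 1 := by
      have h4 := hcon g₀
      rw [hεdef]; field_simp; linear_combination h4
    have hεpm : ε = 1 ∨ ε = -1 := by
      rcases mul_eq_zero.mp (show (ε - 1) * (ε + 1) = 0 by linear_combination hε2) with h | h
      · exact Or.inl (by linear_combination h)
      · exact Or.inr (by linear_combination h)
    set E : M2 := ε • X with hEdef
    have hXE : X = ε • E := by
      rw [hEdef, smul_smul, ← sq, hε2, one_smul]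
    have htrE : Matrix.trace E = 2 := by
      rw [hEdef, Matrix.trace_smul, hεdef, smul_eq_mul]
      have h4 := hcon g₀
      have h2 : (2:ℂ) ≠ 0 := two_ne_zero
      field_simp
      linear_combination h4
    have hdetE : E.det = 1 := by
      rw [hEdef, Matrix.det_smul, hdetX, Fintype.card_fin]
      simpa using hε2
    have hE1 : E ≠ 1 := by
      intro h
      rcases hεpm with h1 | h1
      · exact hX1 (by rw [hXE, h, h1, one_smul])
      · exact hXm1 (by rw [hXE, h, h1]; simp)
    set N : M2 := E - 1 with hNdef
    have hEN : E = N + 1 := by rw [hNdef, sub_add_cancel]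
    have hN0 : N ≠ 0 := fun h => hE1 (by rw [hEN, h, zero_add])
    have hNsq : N * N = 0 := by
      have ha : E 0 0 + E 1 1 = 2 := by rw [← htrE, Matrix.trace_fin_two]
      have hd : E 0 0 * E 1 1 - E 0 1 * E 1 0 = 1 := by rw [← hdetE, Matrix.det_fin_two]
      have hNE : N = !![E 0 0 - 1, E 0 1; E 1 0, E 1 1 - 1] := by
        ext i j; fin_cases i <;> fin_cases j <;> simp [hNdef, Matrix.one_apply]
      rw [hNE]
      ext i j
      fin_cases i <;> fin_cases j <;> simp [Matrix.mul_apply, Fin.sum_univ_two]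
      · linear_combination E 0 0 * ha - hd
      · linear_combination E 0 1 * ha
      · linear_combination E 1 0 * ha
      · linear_combination E 1 1 * ha - hd
    have hex : ∃ i j, N i j ≠ 0 := by
      by_contra h; push_neg at h
      exact hN0 (by ext i j; simpa using h i j)
    obtain ⟨i₀, j₀, hij⟩ := hex
    set w : Fin 2 → ℂ := Pi.single j₀ 1 with hwdef
    set v : Fin 2 → ℂ := N.mulVec w with hvdef
    have hvcol : ∀ i, v i = N i j₀ := by
      intro i; rw [hvdef, hwdef, Matrix.mulVec_single]; simp
    have hv0 : v ≠ 0 := by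
      intro h
      exact hij (by rw [← hvcol i₀, h]; rfl)
    have hNv : N.mulVec v = 0 := by rw [hvdef, Matrix.mulVec_mulVec, hNsq, Matrix.zero_mulVec]
    set P : M2 := !![v 0, w 0; v 1, w 1] with hPdef
    have hdetP : P.det ≠ 0 := by
      intro hdp
      rw [hPdef, Matrix.det_fin_two_of] at hdp
      have hvor : v 0 ≠ 0 ∨ v 1 ≠ 0 := by
        by_contra h; push_neg at h
        exact hv0 (by ext i; fin_cases i; exacts [h.1, h.2])
      have hwv : ∃ k : ℂ, w = k • v := by
        rcases hvor with h0 | h1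
        · refine ⟨w 0 / v 0, ?_⟩
          ext i; fin_cases i <;> simp [Pi.smul_apply, smul_eq_mul]
          · exact (div_mul_cancel₀ _ h0).symm
          · rw [div_mul_eq_mul_div, eq_div_iff h0]; linear_combination hdp
        · refine ⟨w 1 / v 1, ?_⟩
          ext i; fin_cases i <;> simp [Pi.smul_apply, smul_eq_mul]
          · rw [div_mul_eq_mul_div, eq_div_iff h1]; linear_combination -hdp
          · exact (div_mul_cancel₀ _ h1).symm
      obtain ⟨k, hk⟩ := hwv
      apply hv0
      rw [hvdef, hk, Matrix.mulVec_smul, hNv, smul_zero]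
    have hPunit : IsUnit P.det := isUnit_iff_ne_zero.mpr hdetP
    have hPP : P * P⁻¹ = 1 := Matrix.mul_nonsing_inv P hPunit
    have hPP' : P⁻¹ * P = 1 := Matrix.nonsing_inv_mul P hPunit
    set τ : G → M2 := fun h => P⁻¹ * ((ρ h : M2) * P) with hτdef
    have hτmul : ∀ h₁ h₂ : G, τ h₁ * τ h₂ = τ (h₁ * h₂) := by
      intro h₁ h₂
      have hcoe : ((ρ (h₁ * h₂) : SL2C) : M2) = (ρ h₁ : M2) * (ρ h₂ : M2) := by
        rw [map_mul]; rfl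
      simp only [hτdef, hcoe]
      simp only [mul_assoc]
      rw [show (P * (P⁻¹ * (((ρ h₂ : SL2C) : M2) * P))) = ((ρ h₂ : SL2C) : M2) * P by
        rw [← mul_assoc, hPP, one_mul]]
    have hτtr : ∀ h : G, Matrix.trace (τ h) = Matrix.trace (ρ h : M2) := by
      intro h
      simp only [hτdef]
      rw [Matrix.trace_mul_comm, mul_assoc, hPP, mul_one]
    have hEv : E.mulVec v = v := by
      rw [hEN, Matrix.add_mulVec, hNv, Matrix.one_mulVec, zero_add]
    have hEw : E.mulVec w = v + w := by
      rw [hEN, Matrix.add_mulVec, Matrix.one_mulVec, hvdef]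
    have hXv : X.mulVec v = ε • v := by rw [hXE, Matrix.smul_mulVec, hEv]
    have hXw : X.mulVec w = ε • (v + w) := by rw [hXE, Matrix.smul_mulVec, hEw]
    have h1 := congrFun hXv 0
    have h2 := congrFun hXv 1
    have h3 := congrFun hXw 0
    have h4 := congrFun hXw 1
    simp only [Matrix.mulVec, dotProduct, Fin.sum_univ_two, Pi.smul_apply, Pi.add_apply,
      smul_eq_mul] at h1 h2 h3 h4
    have hXP : X * P = P * (ε • !![1, 1; 0, 1]) := by
      ext i j
      fin_cases i <;> fin_cases j <;>
        simp [hPdef, Matrix.mul_apply, Fin.sum_univ_two]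
      · linear_combination h1
      · linear_combination h3
      · linear_combination h2
      · linear_combination h4
    have hτg₀ : τ g₀ = ε • !![1, 1; 0, 1] := by
      simp only [hτdef]
      rw [← hXdef, hXP, ← mul_assoc, hPP', one_mul]
    have hτsq : τ g₀ * τ g₀ = !![1, 2; 0, 1] := by
      rw [hτg₀, smul_mul_smul_comm, ← sq, hε2, one_smul]
      norm_num [Matrix.mul_fin_two]
    have hc0 : ∀ h : G, τ h 1 0 = 0 := by
      intro h
      set t := Matrix.trace (τ h) with htdef
      set c := τ h 1 0 with hcdef
      have ht1 : t ^ 2 = 4 := by rw [htdef, hτtr]; exact hcon h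
      have ht2 : (ε * (t + c)) ^ 2 = 4 := by
        have e1 : Matrix.trace (τ g₀ * τ h) = ε * (t + c) := by
          rw [trace_mul_fin_two, hτg₀, htdef, Matrix.trace_fin_two]
          simp [Matrix.smul_apply]
          ring
        rw [← e1, hτmul, hτtr]
        exact hcon _
      have ht3 : (t + 2 * c) ^ 2 = 4 := by
        have e2 : Matrix.trace (τ g₀ * (τ g₀ * τ h)) = t + 2 * c := by
          rw [← mul_assoc, hτsq, trace_mul_fin_two, htdef, Matrix.trace_fin_two]
          norm_num
          ring
        rw [← e2, hτmul, hτmul, hτtr]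
        exact hcon _
      have k1 : c * (2 * t + c) = 0 := by
        linear_combination ht2 - (t + c) ^ 2 * hε2 - ht1
      have k2 : c * (t + c) = 0 := by
        linear_combination (1/4 : ℂ) * ht3 - (1/4 : ℂ) * ht1
      by_contra hc
      have e1 : 2 * t + c = 0 := (mul_eq_zero.mp k1).resolve_left hc
      have e2 : t + c = 0 := (mul_eq_zero.mp k2).resolve_left hc
      have ht0 : t = 0 := by linear_combination e1 - e2
      rw [ht0] at ht1
      norm_num at ht1
    refine not_irr_of_eigvec ρ v hv0 (fun g => ⟨τ g 0 0, ?_⟩) hirr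
    have hvP : P.mulVec (Pi.single 0 1) = v := by
      ext i
      fin_cases i <;>
        simp [hPdef, Matrix.mulVec, dotProduct, Fin.sum_univ_two]
    have hPτ : (ρ g : M2) * P = P * τ g := by
      simp only [hτdef]
      rw [← mul_assoc, hPP, one_mul]
    calc (ρ g : M2).mulVec v = ((ρ g : M2) * P).mulVec (Pi.single 0 1) := by
          rw [← Matrix.mulVec_mulVec, hvP]
      _ = (P * τ g).mulVec (Pi.single 0 1) := by rw [hPτ]
      _ = P.mulVec ((τ g).mulVec (Pi.single 0 1)) := by rw [Matrix.mulVec_mulVec]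
      _ = P.mulVec (τ g 0 0 • (Pi.single 0 1 : Fin 2 → ℂ)) := by
          ext i
          fin_cases i <;>
            simp [Matrix.mulVec, dotProduct, Fin.sum_univ_two, hc0 g]
      _ = τ g 0 0 • v := by rw [Matrix.mulVec_smul, hvP]

/-- If `ρ` is irreducible and `χ_ρ = χ_{ρ'}`, then `ρ'` is conjugate to `ρ`;
in particular `ρ'` is irreducible. -/
theorem stmt_0 {G : Type*} [Group G] (ρ ρ' : G →* SL2C)
    (hirr : IsIrreducibleRep ρ)
    (hchar : ∀ g : G, Matrix.trace (ρ g : Matrix (Fin 2) (Fin 2) ℂ)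
      = Matrix.trace (ρ' g : Matrix (Fin 2) (Fin 2) ℂ)) :
    (∃ A : SL2C, ∀ g : G, ρ' g = A * ρ g * A⁻¹) ∧ IsIrreducibleRep ρ' := by
  obtain ⟨g₀, hg₀⟩ := exists_trace_sq_ne ρ hirr
  obtain ⟨s, hs⟩ : ∃ s : ℂ, s ^ 2 = (Matrix.trace (ρ g₀ : M2)) ^ 2 - 4 :=
    IsAlgClosed.exists_pow_nat_eq _ two_pos
  set t : ℂ := Matrix.trace (ρ g₀ : M2) with htdef
  have hs0 : s ≠ 0 := by
    intro h; rw [h] at hs; exact hg₀ (by linear_combination -hs)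
  set l₁ : ℂ := (t + s) / 2 with hl₁
  set l₂ : ℂ := (t - s) / 2 with hl₂
  have hsum : l₁ + l₂ = t := by rw [hl₁, hl₂]; ring
  have hprod : l₁ * l₂ = 1 := by rw [hl₁, hl₂]; field_simp; linear_combination -hs
  have hne : l₁ ≠ l₂ := fun h => hs0 (by linear_combination h)
  have hnesub : l₁ - l₂ ≠ 0 := sub_ne_zero.mpr hne
  obtain ⟨P, hPdet, hPconj⟩ := diag_lemma (ρ g₀ : M2) (ρ g₀).2 l₁ l₂ hsum hprod hne
  obtain ⟨Q, hQdet, hQconj⟩ := diag_lemma (ρ' g₀ : M2) (ρ' g₀).2 l₁ l₂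
    (by rw [← hchar g₀]; exact hsum) hprod hne
  set Psl : SL2C := ⟨P, hPdet⟩ with hPsl
  set Qsl : SL2C := ⟨Q, hQdet⟩ with hQsl
  have hDdet : (!![l₁, 0; 0, l₂] : M2).det = 1 := by
    rw [Matrix.det_fin_two_of]; linear_combination hprod
  set D : SL2C := ⟨!![l₁, 0; 0, l₂], hDdet⟩ with hD
  set σ : G →* SL2C := (MulAut.conj Psl⁻¹).toMonoidHom.comp ρ with hσdef
  set σ' : G →* SL2C := (MulAut.conj Qsl⁻¹).toMonoidHom.comp ρ' with hσ'def
  have hσ : ∀ g, σ g = Psl⁻¹ * ρ g * Psl := fun g => by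
    simp [hσdef, MulAut.conj_apply]
  have hσ' : ∀ g, σ' g = Qsl⁻¹ * ρ' g * Qsl := fun g => by
    simp [hσ'def, MulAut.conj_apply]
  have hσirr : IsIrreducibleRep σ :=
    irr_of_conj ρ σ Psl⁻¹ (fun g => by rw [hσ g, inv_inv]) hirr
  -- σ g₀ = D
  have hσD : σ g₀ = D := by
    apply Subtype.ext
    rw [hσ g₀]
    show ((Psl⁻¹ : SL2C) : M2) * (ρ g₀ : M2) * ((Psl : SL2C) : M2) = (D : M2)
    have hPco : ((Psl : SL2C) : M2) = P := rfl
    rw [hPco, mul_assoc, hPconj, ← mul_assoc]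
    have := sl2_inv_mul Psl
    rw [hPco] at this
    rw [this, one_mul]
  have hσ'D : σ' g₀ = D := by
    apply Subtype.ext
    rw [hσ' g₀]
    show ((Qsl⁻¹ : SL2C) : M2) * (ρ' g₀ : M2) * ((Qsl : SL2C) : M2) = (D : M2)
    have hQco : ((Qsl : SL2C) : M2) = Q := rfl
    rw [hQco, mul_assoc, hQconj, ← mul_assoc]
    have := sl2_inv_mul Qsl
    rw [hQco] at this
    rw [this, one_mul]
  -- trace identities
  have tconj : ∀ (A B : SL2C), Matrix.trace ((A⁻¹ * B * A : SL2C) : M2) = Matrix.trace (B : M2) := by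
    intro A B
    rw [Matrix.SpecialLinearGroup.coe_mul, Matrix.SpecialLinearGroup.coe_mul,
      Matrix.trace_mul_cycle, sl2_mul_inv, one_mul]
  have hχ : ∀ g : G, Matrix.trace ((σ g : SL2C) : M2) = Matrix.trace ((σ' g : SL2C) : M2) := by
    intro g
    rw [hσ g, hσ' g, tconj, tconj]
    exact hchar g
  have hw : ∀ g : G, Matrix.trace ((D : SL2C) * (σ g : SL2C) : M2)
      = Matrix.trace ((D : SL2C) * (σ' g : SL2C) : M2) := by
    intro g
    have h := hχ (g₀ * g)
    rwa [map_mul, map_mul, hσD, hσ'D] at h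
  -- entry notations
  have trDmul : ∀ Y : M2, Matrix.trace ((D : M2) * Y) = l₁ * Y 0 0 + l₂ * Y 1 1 := by
    intro Y
    rw [trace_mul_fin_two]
    show l₁ * Y 0 0 + (0:ℂ) * Y 1 0 + (0:ℂ) * Y 0 1 + l₂ * Y 1 1 = _
    ring
  have key1 : ∀ g : G, (σ g : M2) 0 0 = (σ' g : M2) 0 0 ∧ (σ g : M2) 1 1 = (σ' g : M2) 1 1 := by
    intro g
    have e1 : (σ g : M2) 0 0 + (σ g : M2) 1 1 = (σ' g : M2) 0 0 + (σ' g : M2) 1 1 := by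
      have h := hχ g
      rwa [Matrix.trace_fin_two, Matrix.trace_fin_two] at h
    have e2 : l₁ * (σ g : M2) 0 0 + l₂ * (σ g : M2) 1 1
        = l₁ * (σ' g : M2) 0 0 + l₂ * (σ' g : M2) 1 1 := by
      have h := hw g
      rwa [trDmul, trDmul] at h
    have ha : (σ g : M2) 0 0 = (σ' g : M2) 0 0 := by
      have h5 : (l₁ - l₂) * ((σ g : M2) 0 0 - (σ' g : M2) 0 0) = 0 := by
        linear_combination e2 - l₂ * e1
      exact sub_eq_zero.mp ((mul_eq_zero.mp h5).resolve_left hnesub)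
    exact ⟨ha, by linear_combination e1 - ha⟩
  have key2 : ∀ g h : G,
      (σ g : M2) 0 1 * (σ h : M2) 1 0 = (σ' g : M2) 0 1 * (σ' h : M2) 1 0 ∧
      (σ g : M2) 1 0 * (σ h : M2) 0 1 = (σ' g : M2) 1 0 * (σ' h : M2) 0 1 := by
    intro g h
    have e1 : Matrix.trace ((σ g : M2) * (σ h : M2)) = Matrix.trace ((σ' g : M2) * (σ' h : M2)) := by
      have hh := hχ (g * h)
      rwa [map_mul, map_mul, Matrix.SpecialLinearGroup.coe_mul,
        Matrix.SpecialLinearGroup.coe_mul] at hh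
    have e2 : Matrix.trace ((D : M2) * ((σ g : M2) * (σ h : M2)))
        = Matrix.trace ((D : M2) * ((σ' g : M2) * (σ' h : M2))) := by
      have hh := hw (g * h)
      rwa [map_mul, map_mul, Matrix.SpecialLinearGroup.coe_mul,
        Matrix.SpecialLinearGroup.coe_mul] at hh
    rw [trace_mul_fin_two, trace_mul_fin_two, (key1 g).1, (key1 g).2, (key1 h).1, (key1 h).2] at e1
    rw [trDmul, trDmul, mul_entry00, mul_entry00, mul_entry11, mul_entry11,
      (key1 g).1, (key1 g).2, (key1 h).1, (key1 h).2] at e2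
    have f1 : (σ g : M2) 0 1 * (σ h : M2) 1 0 + (σ g : M2) 1 0 * (σ h : M2) 0 1
        = (σ' g : M2) 0 1 * (σ' h : M2) 1 0 + (σ' g : M2) 1 0 * (σ' h : M2) 0 1 := by
      linear_combination e1
    have f2 : l₁ * ((σ g : M2) 0 1 * (σ h : M2) 1 0) + l₂ * ((σ g : M2) 1 0 * (σ h : M2) 0 1)
        = l₁ * ((σ' g : M2) 0 1 * (σ' h : M2) 1 0) + l₂ * ((σ' g : M2) 1 0 * (σ' h : M2) 0 1) := by
      linear_combination e2
    have h5 : (l₁ - l₂) * ((σ g : M2) 0 1 * (σ h : M2) 1 0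
        - (σ' g : M2) 0 1 * (σ' h : M2) 1 0) = 0 := by
      linear_combination f2 - l₂ * f1
    have hb := sub_eq_zero.mp ((mul_eq_zero.mp h5).resolve_left hnesub)
    exact ⟨hb, by linear_combination f1 - hb⟩
  -- existence of nonzero off-diagonal entries for σ
  have hbex : ∃ h : G, (σ h : M2) 0 1 ≠ 0 := by
    by_contra hb; push_neg at hb
    refine not_irr_of_eigvec σ (Pi.single 1 1) ?_ (fun g => ⟨(σ g : M2) 1 1, ?_⟩) hσirr
    · intro h0; have := congrFun h0 1; simp at this
    · ext i
      rw [Matrix.mulVec_single]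
      fin_cases i <;> simp [hb g]
  have hcex : ∃ h : G, (σ h : M2) 1 0 ≠ 0 := by
    by_contra hc; push_neg at hc
    refine not_irr_of_eigvec σ (Pi.single 0 1) ?_ (fun g => ⟨(σ g : M2) 0 0, ?_⟩) hσirr
    · intro h0; have := congrFun h0 0; simp at this
    · ext i
      rw [Matrix.mulVec_single]
      fin_cases i <;> simp [hc g]
  obtain ⟨hb, hbne⟩ := hbex
  obtain ⟨hc, hcne⟩ := hcex
  have hprodne : (σ hb : M2) 0 1 * (σ hc : M2) 1 0 ≠ 0 := mul_ne_zero hbne hcne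
  have hb'ne : (σ' hb : M2) 0 1 ≠ 0 := by
    intro h0
    apply hprodne
    rw [(key2 hb hc).1, h0, zero_mul]
  have hc'ne : (σ' hc : M2) 1 0 ≠ 0 := by
    intro h0
    apply hprodne
    rw [(key2 hb hc).1, h0, mul_zero]
  set μ : ℂ := (σ' hb : M2) 0 1 / (σ hb : M2) 0 1 with hμdef
  have hμ0 : μ ≠ 0 := div_ne_zero hb'ne hbne
  have hbg : ∀ g : G, (σ' g : M2) 0 1 = μ * (σ g : M2) 0 1 := by
    intro g
    have e1 := (key2 g hc).1
    have e2 := (key2 hb hc).1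
    have h3 : (σ' hc : M2) 1 0 * ((σ' g : M2) 0 1 * (σ hb : M2) 0 1)
        = (σ' hc : M2) 1 0 * ((σ' hb : M2) 0 1 * (σ g : M2) 0 1) := by
      linear_combination (σ g : M2) 0 1 * e2 - (σ hb : M2) 0 1 * e1
    have h4 := mul_left_cancel₀ hc'ne h3
    rw [hμdef, div_mul_eq_mul_div, eq_div_iff hbne]
    linear_combination h4
  have hcg : ∀ g : G, (σ g : M2) 1 0 = μ * (σ' g : M2) 1 0 := by
    intro g
    have e1 := (key2 g hb).2
    have h5 : (σ g : M2) 1 0 * (σ hb : M2) 0 1 = (σ' g : M2) 1 0 * (μ * (σ hb : M2) 0 1) := by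
      rw [e1, hbg hb]
    have h6 : (σ hb : M2) 0 1 * ((σ g : M2) 1 0) = (σ hb : M2) 0 1 * (μ * (σ' g : M2) 1 0) := by
      linear_combination h5
    exact mul_left_cancel₀ hbne h6
  -- square root of μ
  obtain ⟨k, hk⟩ : ∃ k : ℂ, k ^ 2 = μ := IsAlgClosed.exists_pow_nat_eq μ two_pos
  have hk0 : k ≠ 0 := by
    intro h; rw [h] at hk; exact hμ0 (by linear_combination -hk)
  have hkk : k * k⁻¹ = 1 := mul_inv_cancel₀ hk0
  have hAdet : (!![k, 0; 0, k⁻¹] : M2).det = 1 := by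
    rw [Matrix.det_fin_two_of]; linear_combination hkk
  set A₀ : SL2C := ⟨!![k, 0; 0, k⁻¹], hAdet⟩ with hA₀
  have hσ'A : ∀ g : G, σ' g = A₀ * σ g * A₀⁻¹ := by
    intro g
    have hmain : σ' g * A₀ = A₀ * σ g := by
      apply Subtype.ext
      rw [Matrix.SpecialLinearGroup.coe_mul, Matrix.SpecialLinearGroup.coe_mul]
      show (σ' g : M2) * !![k, 0; 0, k⁻¹] = !![k, 0; 0, k⁻¹] * (σ g : M2)
      ext i j
      fin_cases i <;> fin_cases j <;>
        simp [Matrix.mul_apply, Fin.sum_univ_two]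
      all_goals first
        | linear_combination (-k) * (key1 g).1
        | linear_combination (-(k⁻¹)) * (key1 g).2
        | linear_combination k⁻¹ * hbg g - (σ g : M2) 0 1 * k⁻¹ * hk + k * (σ g : M2) 0 1 * hkk
        | linear_combination (-(k⁻¹)) * hcg g + (σ' g : M2) 1 0 * k⁻¹ * hk - k * (σ' g : M2) 1 0 * hkk
    rw [← hmain, mul_inv_cancel_right]
  have hfinal : ∀ g : G, ρ' g = (Qsl * A₀ * Psl⁻¹) * ρ g * (Qsl * A₀ * Psl⁻¹)⁻¹ := by
    intro g
    calc ρ' g = Qsl * (Qsl⁻¹ * ρ' g * Qsl) * Qsl⁻¹ := by group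
      _ = Qsl * (A₀ * (Psl⁻¹ * ρ g * Psl) * A₀⁻¹) * Qsl⁻¹ := by
          rw [← hσ' g, hσ'A g, hσ g]
      _ = (Qsl * A₀ * Psl⁻¹) * ρ g * (Qsl * A₀ * Psl⁻¹)⁻¹ := by group
  exact ⟨⟨Qsl * A₀ * Psl⁻¹, hfinal⟩, irr_of_conj ρ ρ' _ hfinal hirr⟩
end

section
/- Let H, G₁, G₂ be groups with injective homomorphisms φ₁ : H → G₁ and φ₂ : H → G₂, let G = G₁ *_H G₂ be the amalgamated free product (the pushout of φ₁ and φ₂ in the category of groups) with canonical homomorphisms ι₁ : G₁ → G and ι₂ : G₂ → G. Let ρ₁ : G₁ → SL(2,ℂ) and ρ₂ : G₂ → SL(2,ℂ) be representations such that the restrictions ρ₁∘φ₁ and ρ₂∘φ₂ have the same character (tr ρ₁(φ₁(h)) = tr ρ₂(φ₂(h)) for all h ∈ H) and ρ₁∘φ₁ is irreducible. Then there exists a representation ρ : G → SL(2,ℂ) such that χ_{ρ∘ι₁} = χ_{ρ₁} and χ_{ρ∘ι₂} = χ_{ρ₂}; moreover, any two representations ρ, ρ̃ : G → SL(2,ℂ)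 with this property have equal characters: tr ρ(g) = tr ρ̃(g) for all g ∈ G. -/
/-- The character of a representation: `χ_ρ(g) = tr ρ(g)`. -/
noncomputable def char {G : Type*} [Group G] (ρ : G →* SL2C) (g : G) : ℂ :=
  Matrix.trace (ρ g : Matrix (Fin 2) (Fin 2) ℂ)

/-!
By Burnside's theorem the image of an irreducible `τ : Γ → SL(2,ℂ)` spans `M₂(ℂ)`. Then a
representation `σ` with the same character is conjugate to `τ`: the algebra spanned by the pairs
`(τ g, σ g)` is the graph of an automorphism of `M₂(ℂ)` (a proper two-sided ideal of `M₂(ℂ)` would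
contain `1`, which the trace identity forbids), and that automorphism is inner by Skolem–Noether.

Conjugating `ρ₂` so that it agrees with `ρ₁` on `H` lets the two glue to a representation of the
pushout. Conversely, any two representations of `G` with the prescribed characters can each be
conjugated to restrict to `ρ₁` on `G₁`; their restrictions to `G₂` are then conjugate by a matrix
commuting with the irreducible `ρ₁(φ₁(H))`, hence central, so the two representations coincide.
-/

open Module Matrix

theorem Matrix.adjoin_eq_top_of_forall_invariant {n K : Type*} [Fintype n] [DecidableEq n]
    [Nonempty n] [Field K] [IsAlgClosed K] (S : Set (Matrix n n K))
    (hS : ∀ p : Submodule K (n → K), (∀ A ∈ S, ∀ v ∈ p, A *ᵥ v ∈ p) → p = ⊥ ∨ p = ⊤) :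
    Algebra.adjoin K S = ⊤ := by
  set A := Algebra.adjoin K S
  have : IsSimpleModule A (n → K) := by
    refine { eq_bot_or_eq_top := fun p => ?_, exists_pair_ne := ⟨⊥, ⊤, bot_ne_top⟩ }
    have hinv : ∀ M ∈ S, ∀ v ∈ p.restrictScalars K, M *ᵥ v ∈ p.restrictScalars K :=
      fun M hM v hv => p.smul_mem ⟨M, Algebra.subset_adjoin hM⟩ hv
    simpa only [Submodule.restrictScalars_eq_bot_iff, Submodule.restrictScalars_eq_top_iff]
      using hS _ hinv
  have hscalar := (IsSimpleModule.algebraMap_end_bijective_of_isAlgClosed K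
    (A := A) (V := n → K)).2
  have : Module.Finite (End A (n → K)) (n → K) := .of_restrictScalars_finite K _ _
  refine eq_top_iff.2 fun M _ => ?_
  let f : End (End A (n → K)) (n → K) :=
    { toFun := (M *ᵥ ·)
      map_add' := mulVec_add M
      map_smul' := fun e v => by
        obtain ⟨c, rfl⟩ := hscalar e
        simp [Algebra.algebraMap_eq_smul_one, mulVec_smul] }
  obtain ⟨a, ha⟩ := Module.Finite.toModuleEnd_moduleEnd_surjective (R := A) (M := n → K) f
  have : M = a := Matrix.ext_iff_mulVec.2 fun v => (LinearMap.congr_fun ha v).symm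
  exact this ▸ a.2

section GraphAlgebra

variable {M n K : Type*} [Monoid M] [Fintype n] [DecidableEq n] [Field K]
  (ρ σ : M →* Matrix n n K)

theorem Matrix.trace_fst_eq_trace_snd_of_mem_adjoin_range_prod
    (htr : ∀ m, trace (σ m) = trace (ρ m)) {x : Matrix n n K × Matrix n n K}
    (hx : x ∈ Algebra.adjoin K (Set.range (ρ.prod σ))) : trace x.1 = trace x.2 := by
  rw [← Subalgebra.mem_toSubmodule, Algebra.adjoin_eq_span, ← MonoidHom.coe_mrange,
    Submonoid.closure_eq] at hx
  induction hx using Submodule.span_induction with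
  | mem x hx => obtain ⟨m, rfl⟩ := hx; exact (htr m).symm
  | zero => simp
  | add x y _ _ hx hy => simp [trace_add, hx, hy]
  | smul c x _ hx => simp [trace_smul, hx]

theorem Matrix.exists_mk_mem_adjoin_range_prod (hρ : Algebra.adjoin K (Set.range ρ) = ⊤)
    (a : Matrix n n K) : ∃ b, (a, b) ∈ Algebra.adjoin K (Set.range (ρ.prod σ)) := by
  have : a ∈ (Algebra.adjoin K (Set.range (ρ.prod σ))).map (AlgHom.fst K _ _) := by
    rw [AlgHom.map_adjoin, ← Set.range_comp]
    exact hρ ▸ trivial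
  obtain ⟨⟨_, b⟩, hb, rfl⟩ := this
  exact ⟨b, hb⟩

theorem Matrix.eq_zero_of_mk_zero_mem_adjoin_range_prod [Nonempty n] [CharZero K]
    (hρ : Algebra.adjoin K (Set.range ρ) = ⊤) (htr : ∀ m, trace (σ m) = trace (ρ m))
    {x : Matrix n n K} (hx : (x, 0) ∈ Algebra.adjoin K (Set.range (ρ.prod σ))) : x = 0 := by
  set B := Algebra.adjoin K (Set.range (ρ.prod σ))
  have hfst := exists_mk_mem_adjoin_range_prod ρ σ hρ
  let I : TwoSidedIdeal (Matrix n n K) := .mk' {x | (x, 0) ∈ B} B.zero_mem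
    (fun hx hy => by simpa using B.add_mem hx hy) (fun hx => by simpa using B.neg_mem hx)
    (fun {a _} hy => by obtain ⟨b, hb⟩ := hfst a; simpa using B.mul_mem hb hy)
    (fun {_ a} hx => by obtain ⟨b, hb⟩ := hfst a; simpa using B.mul_mem hx hb)
  have hI : I ≠ ⊤ := by
    intro h
    have h10 : ((1 : Matrix n n K), (0 : Matrix n n K)) ∈ B := by
      have : (1 : Matrix n n K) ∈ I := by simp [h]
      simpa [I] using this
    have := trace_fst_eq_trace_snd_of_mem_adjoin_range_prod ρ σ htr h10
    simp [Fintype.card_ne_zero] at this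
  have : x ∈ I := by simpa [I] using hx
  rwa [(eq_bot_or_eq_top I).resolve_right hI, TwoSidedIdeal.mem_bot] at this

theorem Matrix.exists_algEquiv_of_trace_eq [Nonempty n] [CharZero K]
    (hρ : Algebra.adjoin K (Set.range ρ) = ⊤) (htr : ∀ m, trace (σ m) = trace (ρ m)) :
    ∃ e : Matrix n n K ≃ₐ[K] Matrix n n K, ∀ m, e (ρ m) = σ m := by
  set B := Algebra.adjoin K (Set.range (ρ.prod σ))
  let fstB : B →ₐ[K] Matrix n n K := (AlgHom.fst K _ _).comp B.val
  let sndB : B →ₐ[K] Matrix n n K := (AlgHom.snd K _ _).comp B.val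
  have hsnd : Function.Injective sndB := by
    refine (injective_iff_map_eq_zero sndB).2 fun ⟨⟨x, y⟩, hxy⟩ hy => ?_
    obtain rfl : y = 0 := hy
    obtain rfl := eq_zero_of_mk_zero_mem_adjoin_range_prod ρ σ hρ htr hxy
    rfl
  have hfst_surj : Function.Surjective fstB := fun a =>
    let ⟨b, hb⟩ := exists_mk_mem_adjoin_range_prod ρ σ hρ a
    ⟨⟨(a, b), hb⟩, rfl⟩
  have hrank : finrank K B = finrank K (Matrix n n K) :=
    le_antisymm (LinearMap.finrank_le_finrank_of_injective (f := sndB.toLinearMap) hsnd)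
      (LinearMap.finrank_le_finrank_of_surjective (f := fstB.toLinearMap) hfst_surj)
  have hfst : Function.Bijective fstB :=
    ⟨(LinearMap.injective_iff_surjective_of_finrank_eq_finrank hrank
      (f := fstB.toLinearMap)).2 hfst_surj, hfst_surj⟩
  let ψ := sndB.comp (AlgEquiv.ofBijective fstB hfst).symm.toAlgHom
  have hψ : Function.Injective ψ := hsnd.comp (AlgEquiv.injective _)
  refine ⟨.ofBijective ψ ⟨hψ, LinearMap.injective_iff_surjective (f := ψ.toLinearMap) |>.1 hψ⟩,
    fun m => ?_⟩
  have hm : (AlgEquiv.ofBijective fstB hfst).symm (ρ m) =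
      ⟨(ρ m, σ m), Algebra.subset_adjoin ⟨m, rfl⟩⟩ :=
    (AlgEquiv.symm_apply_eq _).2 rfl
  change sndB ((AlgEquiv.ofBijective fstB hfst).symm (ρ m)) = σ m
  rw [hm]
  rfl

end GraphAlgebra

theorem Matrix.exists_conj_of_algEquiv {n K : Type*} [Fintype n] [DecidableEq n] [Field K]
    (e : Matrix n n K ≃ₐ[K] Matrix n n K) :
    ∃ P : GL n K, ∀ x, e x = P * x * P⁻¹ := by
  obtain ⟨T, hT⟩ := ((toLinAlgEquiv'.symm.trans e).trans toLinAlgEquiv').eq_linearEquivConjAlgEquiv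
  have hval (g : LinearMap.GeneralLinearGroup K (n → K)) :
      toLinAlgEquiv' (GeneralLinearGroup.toLin.symm g : Matrix n n K) = g :=
    congr(Units.val $(GeneralLinearGroup.toLin.apply_symm_apply g))
  refine ⟨GeneralLinearGroup.toLin.symm (.ofLinearEquiv T), fun x => toLinAlgEquiv'.injective ?_⟩
  have := congr($hT (toLinAlgEquiv' x))
  simp only [AlgEquiv.trans_apply, AlgEquiv.symm_apply_apply] at this
  rw [this, map_mul, map_mul, ← map_inv, hval, hval]
  rfl

theorem Matrix.GeneralLinearGroup.exists_specialLinearGroup_conj_eq {n K : Type*} [Fintype n]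
    [DecidableEq n] [Nonempty n] [Field K] [IsAlgClosed K] (P : GL n K) :
    ∃ Q : SpecialLinearGroup n K, ∀ x : Matrix n n K,
      (Q : Matrix n n K) * x * (Q⁻¹ : SpecialLinearGroup n K) = P * x * P⁻¹ := by
  have hdet : (P : Matrix n n K).det ≠ 0 := ((isUnit_iff_isUnit_det _).1 P.isUnit).ne_zero
  obtain ⟨s, hs⟩ := IsAlgClosed.exists_pow_nat_eq (P : Matrix n n K).det (Fintype.card_pos (α := n))
  have hs0 : s ≠ 0 := by
    rintro rfl
    exact hdet (hs ▸ zero_pow Fintype.card_ne_zero)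
  let Q : SpecialLinearGroup n K :=
    ⟨s⁻¹ • (P : Matrix n n K), by rw [det_smul, inv_pow, hs, inv_mul_cancel₀ hdet]⟩
  have hQinv : ((Q⁻¹ : SpecialLinearGroup n K) : Matrix n n K) = s • (P⁻¹ : GL n K) := by
    refine left_inv_eq_right_inv (a := (Q : Matrix n n K)) ?_ ?_
    · rw [← SpecialLinearGroup.coe_mul, inv_mul_cancel, SpecialLinearGroup.coe_one]
    · simp [Q, smul_smul, mul_inv_cancel₀ hs0]
  refine ⟨Q, fun x => ?_⟩
  simp [Q, hQinv, smul_smul, mul_inv_cancel₀ hs0]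

theorem Matrix.exists_conj_of_trace_eq {M n K : Type*} [Monoid M] [Fintype n] [DecidableEq n]
    [Nonempty n] [Field K] [CharZero K] (ρ σ : M →* Matrix n n K)
    (hρ : Algebra.adjoin K (Set.range ρ) = ⊤) (htr : ∀ m, trace (σ m) = trace (ρ m)) :
    ∃ P : GL n K, ∀ m, σ m = P * ρ m * P⁻¹ := by
  obtain ⟨e, he⟩ := exists_algEquiv_of_trace_eq ρ σ hρ htr
  obtain ⟨P, hP⟩ := exists_conj_of_algEquiv e
  exact ⟨P, fun m => (he m).symm.trans (hP _)⟩

section Representations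

variable {G : Type*} [Group G]

lemma char_conj_comp (P : SL2C) (ρ : G →* SL2C) :
    char ((MulAut.conj P).toMonoidHom.comp ρ) = char ρ := by
  funext g
  change trace (SpecialLinearGroup.coeMonoidHom (P * ρ g * P⁻¹)) =
    trace (SpecialLinearGroup.coeMonoidHom (ρ g))
  rw [map_mul, map_mul, trace_mul_cycle, ← map_mul, inv_mul_cancel, map_one, one_mul]

namespace IsIrreducibleRep

variable {ρ : G →* SL2C}

lemma of_comp {H : Type*} [Group H] {φ : H →* G} (h : IsIrreducibleRep (ρ.comp φ)) :
    IsIrreducibleRep ρ :=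
  fun ⟨p, hp, hinv⟩ => h ⟨p, hp, fun x => hinv (φ x)⟩

lemma adjoin_range_eq_top (h : IsIrreducibleRep ρ) :
    Algebra.adjoin ℂ (Set.range (SpecialLinearGroup.coeMonoidHom.comp ρ)) = ⊤ := by
  refine adjoin_eq_top_of_forall_invariant _ fun p hp => ?_
  by_contra! hne
  refine h ⟨p, ?_, fun g => hp _ ⟨g, rfl⟩⟩
  have hle : finrank ℂ p ≤ 2 := by simpa using p.finrank_le
  have h0 : finrank ℂ p ≠ 0 := fun h0 => hne.1 (Submodule.finrank_eq_zero.1 h0)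
  have h2 : finrank ℂ p ≠ 2 := fun h2 => hne.2 (Submodule.eq_top_of_finrank_eq (by simpa using h2))
  omega

lemma commute_of_forall_commute (h : IsIrreducibleRep ρ) {P : SL2C} (hP : ∀ g, Commute P (ρ g))
    (Q : SL2C) : Commute P Q := by
  have hQ : (Q : Matrix (Fin 2) (Fin 2) ℂ) ∈ Algebra.adjoin ℂ
      (Set.range (SpecialLinearGroup.coeMonoidHom.comp ρ)) := h.adjoin_range_eq_top ▸ trivial
  have := Algebra.commute_of_mem_adjoin_of_forall_mem_commute hQ (by
    rintro _ ⟨g, rfl⟩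
    exact (hP g).map SpecialLinearGroup.coeMonoidHom)
  exact Subtype.ext this

end IsIrreducibleRep

lemma exists_conj_comp_eq_of_char_eq {τ σ : G →* SL2C} (hτ : IsIrreducibleRep τ)
    (h : ∀ g, char σ g = char τ g) : ∃ P : SL2C, (MulAut.conj P).toMonoidHom.comp σ = τ := by
  obtain ⟨P, hP⟩ := exists_conj_of_trace_eq (SpecialLinearGroup.coeMonoidHom.comp τ)
    (SpecialLinearGroup.coeMonoidHom.comp σ) hτ.adjoin_range_eq_top h
  obtain ⟨Q, hQ⟩ := GeneralLinearGroup.exists_specialLinearGroup_conj_eq P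
  have hσ (g : G) : σ g = Q * τ g * Q⁻¹ := by
    apply SpecialLinearGroup.coeMonoidHom_injective
    simpa using (hP g).trans (hQ _).symm
  refine ⟨Q⁻¹, MonoidHom.ext fun g => ?_⟩
  simp [hσ, mul_assoc]

lemma eq_of_char_eq_of_comp_eq {H : Type*} [Group H] {τ τ' : G →* SL2C} {φ : H →* G}
    (hirr : IsIrreducibleRep (τ.comp φ)) (hchar : ∀ g, char τ' g = char τ g)
    (hφ : τ'.comp φ = τ.comp φ) : τ' = τ := by
  obtain ⟨P, hP⟩ := exists_conj_comp_eq_of_char_eq hirr.of_comp hchar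
  have hconj (g : G) : P * τ' g * P⁻¹ = τ g := congr($hP g)
  have hcomm (h : H) : Commute P ((τ.comp φ) h) := by
    have := hconj (φ h)
    rw [show τ' (φ h) = τ (φ h) from congr($hφ h)] at this
    exact mul_inv_eq_iff_eq_mul.1 this
  refine MonoidHom.ext fun g => ?_
  rw [← hconj g, (hirr.commute_of_forall_commute hcomm (τ' g)).eq, mul_inv_cancel_right]

lemma exists_char_eq_comp_eq {K : Type*} [Group K] {τ : G →* SL2C} (hτ : IsIrreducibleRep τ)
    {ρ : K →* SL2C} {ι : G →* K} (h : ∀ g, char ρ (ι g) = char τ g) :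
    ∃ ν : K →* SL2C, char ν = char ρ ∧ ν.comp ι = τ := by
  obtain ⟨P, hP⟩ := exists_conj_comp_eq_of_char_eq hτ (σ := ρ.comp ι) h
  exact ⟨_, char_conj_comp P ρ, by rw [MonoidHom.comp_assoc, hP]⟩

end Representations

theorem stmt_2_general {H G₁ G₂ G : Type} [Group H] [Group G₁] [Group G₂] [Group G]
    (φ₁ : H →* G₁) (φ₂ : H →* G₂)
    (ι₁ : G₁ →* G) (ι₂ : G₂ →* G)
    (hcomm : ι₁.comp φ₁ = ι₂.comp φ₂)
    (huniv : ∀ (K : Type) [Group K] (f₁ : G₁ →* K) (f₂ : G₂ →* K),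
      f₁.comp φ₁ = f₂.comp φ₂ → ∃! f : G →* K, f.comp ι₁ = f₁ ∧ f.comp ι₂ = f₂)
    (ρ₁ : G₁ →* SL2C) (ρ₂ : G₂ →* SL2C)
    (hchar : ∀ h : H, char ρ₁ (φ₁ h) = char ρ₂ (φ₂ h))
    (hirr : IsIrreducibleRep (ρ₁.comp φ₁)) :
    (∃ ρ : G →* SL2C,
      (∀ g₁ : G₁, char ρ (ι₁ g₁) = char ρ₁ g₁) ∧ (∀ g₂ : G₂, char ρ (ι₂ g₂) = char ρ₂ g₂)) ∧
    (∀ ρ ρ2 : G →* SL2C,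
      ((∀ g₁ : G₁, char ρ (ι₁ g₁) = char ρ₁ g₁) ∧ (∀ g₂ : G₂, char ρ (ι₂ g₂) = char ρ₂ g₂)) →
      ((∀ g₁ : G₁, char ρ2 (ι₁ g₁) = char ρ₁ g₁) ∧ (∀ g₂ : G₂, char ρ2 (ι₂ g₂) = char ρ₂ g₂)) →
      ∀ g : G, char ρ g = char ρ2 g) := by
  have hres (ρ : G →* SL2C) : (ρ.comp ι₂).comp φ₂ = (ρ.comp ι₁).comp φ₁ := by
    rw [MonoidHom.comp_assoc, MonoidHom.comp_assoc, hcomm]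
  constructor
  · obtain ⟨ρ₂', hρ₂', hglue⟩ := exists_char_eq_comp_eq hirr (ι := φ₂) fun h => (hchar h).symm
    obtain ⟨ρ, ⟨hρ₁, hρ₂⟩, -⟩ := huniv SL2C ρ₁ ρ₂' hglue.symm
    refine ⟨ρ, fun g₁ => by rw [← hρ₁]; rfl, fun g₂ => ?_⟩
    rw [← hρ₂', ← hρ₂]
    rfl
  · rintro ρ ρ' ⟨hρ₁, hρ₂⟩ ⟨hρ'₁, hρ'₂⟩
    obtain ⟨ν, hν, hν₁⟩ := exists_char_eq_comp_eq hirr.of_comp hρ₁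
    obtain ⟨ν', hν', hν'₁⟩ := exists_char_eq_comp_eq hirr.of_comp hρ'₁
    have hν₂ : ν'.comp ι₂ = ν.comp ι₂ := by
      refine eq_of_char_eq_of_comp_eq (φ := φ₂) (by rwa [hres, hν₁]) (fun g => ?_)
        (by rw [hres, hres, hν₁, hν'₁])
      change char ν' (ι₂ g) = char ν (ι₂ g)
      rw [hν', hν, hρ'₂, hρ₂]
    have : ν' = ν := (huniv SL2C _ _ (hres ν).symm).unique ⟨hν'₁.trans hν₁.symm, hν₂⟩ ⟨rfl, rfl⟩
    intro g
    rw [← hν, ← hν', this]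

/-- Gluing characters along an amalgamated free product (pushout of groups):
if `ρ₁∘φ₁` and `ρ₂∘φ₂` have the same character and `ρ₁∘φ₁` is irreducible, then there is a
representation of `G = G₁ *_H G₂` restricting (at the character level) to `χ_{ρ₁}` and
`χ_{ρ₂}`, and its character is unique. -/
theorem stmt_2 {H G₁ G₂ G : Type} [Group H] [Group G₁] [Group G₂] [Group G]
    (φ₁ : H →* G₁) (φ₂ : H →* G₂)
    (hφ₁ : Function.Injective φ₁) (hφ₂ : Function.Injective φ₂)
    (ι₁ : G₁ →* G) (ι₂ : G₂ →* G)
    (hcomm : ι₁.comp φ₁ = ι₂.comp φ₂)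
    (huniv : ∀ (K : Type) [Group K] (f₁ : G₁ →* K) (f₂ : G₂ →* K),
      f₁.comp φ₁ = f₂.comp φ₂ → ∃! f : G →* K, f.comp ι₁ = f₁ ∧ f.comp ι₂ = f₂)
    (ρ₁ : G₁ →* SL2C) (ρ₂ : G₂ →* SL2C)
    (hchar : ∀ h : H, char ρ₁ (φ₁ h) = char ρ₂ (φ₂ h))
    (hirr : IsIrreducibleRep (ρ₁.comp φ₁)) :
    (∃ ρ : G →* SL2C,
      (∀ g₁ : G₁, char ρ (ι₁ g₁) = char ρ₁ g₁) ∧ (∀ g₂ : G₂, char ρ (ι₂ g₂) = char ρ₂ g₂)) ∧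
    (∀ ρ ρ2 : G →* SL2C,
      ((∀ g₁ : G₁, char ρ (ι₁ g₁) = char ρ₁ g₁) ∧ (∀ g₂ : G₂, char ρ (ι₂ g₂) = char ρ₂ g₂)) →
      ((∀ g₁ : G₁, char ρ2 (ι₁ g₁) = char ρ₁ g₁) ∧ (∀ g₂ : G₂, char ρ2 (ι₂ g₂) = char ρ₂ g₂)) →
      ∀ g : G, char ρ g = char ρ2 g) :=
  stmt_2_general φ₁ φ₂ ι₁ ι₂ hcomm huniv ρ₁ ρ₂ hchar hirr
end

section
/- The polynomial F = (T² − (X + Y + Z − 2))² − (2 − X)(2 − Y)(2 − Z) is irreducible in the polynomial ring ℂ[X, Y, Z, T]; equivalently, the hypersurface 𝒴 = {(x,y,z,t) ∈ ℂ⁴ : (t² − (x+y+z−2))² = (2−x)(2−y)(2−z)} is an irreducible hypersurface in ℂ⁴. -/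
open MvPolynomial

/-- The defining polynomial `F = (T² − (X + Y + Z − 2))² − (2 − X)(2 − Y)(2 − Z)` of the
hypersurface `𝒴 ⊂ ℂ⁴`, with variables `X 0 = X`, `X 1 = Y`, `X 2 = Z`, `X 3 = T`. -/
noncomputable def F : MvPolynomial (Fin 4) ℂ :=
  (X 3 ^ 2 - (X 0 + X 1 + X 2 - 2)) ^ 2 - (2 - X 0) * (2 - X 1) * (2 - X 2)

/-!
As a polynomial in `X`, `F = X² + (m - 2a) X + a² - 2m` is monic quadratic over `ℂ[Y, Z, T]`,
where `a = T² - Y - Z + 2` and `m = (2 - Y)(2 - Z)`. A reducible monic quadratic has a square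
discriminant, but the discriminant `m (m - 4a + 8) = (Y - 2)(Z - 2)((2 + Y)(2 + Z) - 4T²)` is
divisible by the prime `Y - 2` exactly once.

Below, `finSuccEquiv` makes `X` the polynomial variable and renames `Y, Z, T` to `X 0, X 1, X 2`.
-/

theorem Polynomial.Monic.isSquare_discrim_of_not_irreducible {R : Type*} [CommRing R]
    [NoZeroDivisors R] {p : Polynomial R} (hm : p.Monic) (hd : p.natDegree = 2)
    (h : ¬Irreducible p) :
    IsSquare (discrim 1 (p.coeff 1) (p.coeff 0)) := by
  obtain ⟨c₁, c₂, h₀, h₁⟩ := (hm.not_irreducible_iff_exists_add_mul_eq_coeff hd).mp h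
  exact ⟨c₁ - c₂, by rw [discrim, h₀, h₁]; ring⟩

theorem Prime.not_isSquare_mul {M : Type*} [CommMonoidWithZero M] [IsCancelMulZero M] {p u : M}
    (hp : Prime p) (hu : ¬p ∣ u) : ¬IsSquare (p * u) := by
  rintro ⟨r, hr⟩
  obtain ⟨s, rfl⟩ := hp.dvd_of_dvd_pow (n := 2) ⟨u, by rw [sq, hr]⟩
  exact hu ⟨s * s, mul_left_cancel₀ hp.ne_zero (by rw [hr]; ac_rfl)⟩

theorem MvPolynomial.prime_X_zero_sub_C {R : Type*} [CommRing R] [IsDomain R] {n : ℕ} (a : R) :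
    Prime (X 0 - C a : MvPolynomial (Fin (n + 1)) R) := by
  rw [← MulEquiv.prime_iff (finSuccEquiv R n), map_sub, finSuccEquiv_X_zero, finSuccEquiv_apply,
    eval₂Hom_C]
  exact Polynomial.prime_X_sub_C _

theorem finSuccEquiv_F : finSuccEquiv ℂ 3 F =
    Polynomial.X ^ 2
      + Polynomial.C ((2 - X 0) * (2 - X 1) - 2 * (X 2 ^ 2 - X 0 - X 1 + 2)) * Polynomial.X
      + Polynomial.C ((X 2 ^ 2 - X 0 - X 1 + 2) ^ 2 - 2 * ((2 - X 0) * (2 - X 1))) := by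
  have h1 : (1 : Fin 4) = (0 : Fin 3).succ := rfl
  have h2 : (2 : Fin 4) = (1 : Fin 3).succ := rfl
  have h3 : (3 : Fin 4) = (2 : Fin 3).succ := rfl
  simp only [F, h1, h2, h3, map_sub, map_add, map_mul, map_pow, map_ofNat,
    finSuccEquiv_X_zero, finSuccEquiv_X_succ]
  ring

theorem monic_finSuccEquiv_F : (finSuccEquiv ℂ 3 F).Monic := by
  rw [finSuccEquiv_F]; monicity!

theorem natDegree_finSuccEquiv_F : (finSuccEquiv ℂ 3 F).natDegree = 2 := by
  rw [finSuccEquiv_F]; compute_degree!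

theorem discrim_finSuccEquiv_F :
    discrim 1 ((finSuccEquiv ℂ 3 F).coeff 1) ((finSuccEquiv ℂ 3 F).coeff 0) =
      (X 0 - C 2) * ((X 1 - C 2) * ((2 + X 0) * (2 + X 1) - 4 * X 2 ^ 2)) := by
  simp only [finSuccEquiv_F, discrim, Polynomial.coeff_add, Polynomial.coeff_C_mul_X,
    Polynomial.coeff_X_pow, Polynomial.coeff_C, map_ofNat]
  norm_num
  ring

theorem X_zero_sub_C_two_not_dvd :
    ¬(X 0 - C 2 : MvPolynomial (Fin 3) ℂ) ∣
      (X 1 - C 2) * ((2 + X 0) * (2 + X 1) - 4 * X 2 ^ 2) := by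
  rintro ⟨q, hq⟩
  simpa using congrArg (eval ![2, 0, 0]) hq

/-- The polynomial `F` is irreducible in `ℂ[X,Y,Z,T]`, i.e. the hypersurface `𝒴` is an
irreducible hypersurface in `ℂ⁴`. -/
theorem stmt_3 : Irreducible F := by
  rw [← MulEquiv.irreducible_iff (finSuccEquiv ℂ 3)]
  by_contra h
  apply Prime.not_isSquare_mul (prime_X_zero_sub_C 2) X_zero_sub_C_two_not_dvd
  rw [← discrim_finSuccEquiv_F]
  exact monic_finSuccEquiv_F.isSquare_discrim_of_not_irreducible natDegree_finSuccEquiv_F h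
end

section
/- The polynomial map φ(w,u,v,t) = (u² + v² + uvw, u², v², t) maps the hypersurface ℋ = {(w,u,v,t) ∈ ℂ⁴ : u² + v² + uvw − w² − t² + 4 = 0} onto the hypersurface 𝒴' = {(ξ,υ,ζ,τ) ∈ ℂ⁴ : (ξ − υ − ζ)² = (ξ − τ² + 4)υζ}: every point of ℋ is sent by φ into 𝒴', and every point (ξ,υ,ζ,τ) ∈ 𝒴' equals φ(w,u,v,t) for some (w,u,v,t) ∈ ℋ. -/
/-- The hypersurface `ℋ = {(w,u,v,t) ∈ ℂ⁴ : u² + v² + uvw − w² − t² + 4 = 0}`. -/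
def SurfH : Set (ℂ × ℂ × ℂ × ℂ) :=
  {p | p.2.1 ^ 2 + p.2.2.1 ^ 2 + p.2.1 * p.2.2.1 * p.1 - p.1 ^ 2 - p.2.2.2 ^ 2 + 4 = 0}

/-- The polynomial map `φ(w,u,v,t) = (u² + v² + uvw, u², v², t)`. -/
noncomputable def phi : ℂ × ℂ × ℂ × ℂ → ℂ × ℂ × ℂ × ℂ :=
  fun p => (p.2.1 ^ 2 + p.2.2.1 ^ 2 + p.2.1 * p.2.2.1 * p.1, p.2.1 ^ 2, p.2.2.1 ^ 2, p.2.2.2)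

/-- The hypersurface `𝒴' = {(ξ,υ,ζ,τ) ∈ ℂ⁴ : (ξ − υ − ζ)² = (ξ − τ² + 4)υζ}`. -/
def SurfY' : Set (ℂ × ℂ × ℂ × ℂ) :=
  {q | (q.1 - q.2.1 - q.2.2.1) ^ 2 = (q.1 - q.2.2.2 ^ 2 + 4) * q.2.1 * q.2.2.1}

/-! Pulled back by `φ`, the equation of `𝒴'` becomes `−u²v²` times the equation of `ℋ`.
Conversely, over `(ξ,υ,ζ,τ) ∈ 𝒴'`, choose square roots `u, v` of `υ, ζ`; a preimage `(w,u,v,τ)` then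
needs `uv·w = ξ − υ − ζ` and `w² = ξ − τ² + 4`, and the equation of `𝒴'` says exactly that
`(ξ − υ − ζ)² = (ξ − τ² + 4)(uv)²`. So `w = (ξ − υ − ζ)/(uv)` works when `uv ≠ 0`; when
`uv = 0` the equation forces `ξ = υ + ζ` and `w` is any square root of `ξ − τ² + 4`. -/

lemma exists_mul_eq_and_sq_eq {K : Type*} [Field K] {c d e : K} (h : d ^ 2 = e * c ^ 2)
    (he : ∃ r, r ^ 2 = e) : ∃ w, c * w = d ∧ w ^ 2 = e := by
  by_cases hc : c = 0
  · obtain ⟨w, rfl⟩ := he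
    have hd : d = 0 := by simpa [hc] using h
    exact ⟨w, by simp [hc, hd], rfl⟩
  · refine ⟨d / c, mul_div_cancel₀ d hc, ?_⟩
    rw [div_pow, h, mul_div_cancel_right₀ e (pow_ne_zero 2 hc)]

lemma phi_mapsTo : Set.MapsTo phi SurfH SurfY' := by
  rintro ⟨w, u, v, t⟩ hp
  simp only [SurfH, Set.mem_ofPred_eq] at hp
  simp only [SurfY', phi, Set.mem_ofPred_eq]
  linear_combination (-(u ^ 2 * v ^ 2)) * hp

lemma phi_surjOn : Set.SurjOn phi SurfH SurfY' := by
  rintro ⟨ξ, υ, ζ, τ⟩ hq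
  simp only [SurfY', Set.mem_ofPred_eq] at hq
  obtain ⟨u, rfl⟩ := IsAlgClosed.exists_pow_nat_eq υ two_pos
  obtain ⟨v, rfl⟩ := IsAlgClosed.exists_pow_nat_eq ζ two_pos
  obtain ⟨w, hw, hw2⟩ := exists_mul_eq_and_sq_eq (c := u * v) (d := ξ - u ^ 2 - v ^ 2)
    (e := ξ - τ ^ 2 + 4) (by linear_combination hq)
    (IsAlgClosed.exists_pow_nat_eq _ two_pos)
  refine ⟨(w, u, v, τ), ?_, ?_⟩
  · simp only [SurfH, Set.mem_ofPred_eq]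
    linear_combination hw - hw2
  · simp only [phi, Prod.mk.injEq, and_true]
    linear_combination hw

/-- `φ` maps `ℋ` onto `𝒴'`. -/
theorem stmt_5 :
    (∀ p ∈ SurfH, phi p ∈ SurfY') ∧ (∀ q ∈ SurfY', ∃ p ∈ SurfH, phi p = q) :=
  ⟨fun _ hp => phi_mapsTo hp, fun _ hq => phi_surjOn hq⟩
end

section
/- The restriction to ℋ of the polynomial map φ(w,u,v,t) = (u² + v² + uvw, u², v², t) is finite-to-one: for every point (ξ,υ,ζ,τ) ∈ ℂ⁴, the set {(w,u,v,t) ∈ ℋ : φ(w,u,v,t) = (ξ,υ,ζ,τ)} is finite. -/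
open Polynomial

section QuadraticRoots

variable {R : Type*} [CommRing R] [IsDomain R]

theorem finite_setOf_quadratic_eq_zero (b c : R) :
    {x : R | x ^ 2 + b * x + c = 0}.Finite := by
  have hmonic : (X ^ 2 + C b * X + C c : R[X]).Monic := by monicity!
  simpa using finite_setOfPred_isRoot hmonic.ne_zero

theorem finite_setOf_sq_eq (a : R) : {x : R | x ^ 2 = a}.Finite := by
  simpa [← sub_eq_add_neg, sub_eq_zero] using finite_setOf_quadratic_eq_zero 0 (-a)

end QuadraticRoots

/-- The restriction of `φ` to `ℋ` is finite-to-one: each fiber is finite. -/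
theorem stmt_6 (q : ℂ × ℂ × ℂ × ℂ) : {p ∈ SurfH | phi p = q}.Finite := by
  obtain ⟨_, υ, ζ, τ⟩ := q
  refine ((finite_setOf_sq_eq υ).biUnion fun u _ => (finite_setOf_sq_eq ζ).biUnion fun v _ =>
    (finite_setOf_quadratic_eq_zero (-(u * v)) (τ ^ 2 - u ^ 2 - v ^ 2 - 4)).image
      fun w => (w, u, v, τ)).subset ?_
  rintro ⟨w, u, v, t⟩ ⟨hH, hφ⟩
  simp only [SurfH, Set.mem_ofPred_eq] at hH
  simp only [phi, Prod.mk.injEq] at hφ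
  obtain ⟨-, rfl, rfl, rfl⟩ := hφ
  simp only [Set.mem_iUnion, Set.mem_image, Set.mem_ofPred_eq]
  exact ⟨u, rfl, v, rfl, w, by linear_combination -hH, rfl⟩
end

section
/- The restriction of the polynomial map φ(w,u,v,t) = (u² + v² + uvw, u², v², t) to the hypersurface ℋ, viewed as a map from ℋ onto 𝒴' (both with the topology induced from the standard topology of ℂ⁴), is a proper map: the preimage in ℋ of every compact subset of 𝒴' is compact. -/
theorem continuous_phi : Continuous phi := by
  unfold phi; fun_prop

theorem isClosed_surfH : IsClosed SurfH :=
  isClosed_eq (by fun_prop) continuous_const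

theorem norm_le_of_sq_eq_add_mul {𝕜 : Type*} [NormedField 𝕜] {w a b : 𝕜}
    (h : w ^ 2 = a + b * w) : ‖w‖ ≤ 1 + ‖a‖ + ‖b‖ := by
  have hsq : ‖w‖ ^ 2 ≤ ‖a‖ + ‖b‖ * ‖w‖ :=
    calc ‖w‖ ^ 2 = ‖a + b * w‖ := by rw [← norm_pow, h]
      _ ≤ ‖a‖ + ‖b‖ * ‖w‖ := (norm_add_le _ _).trans_eq (by rw [norm_mul])
  rcases le_or_gt ‖w‖ 1 with hw | hw
  · linarith [norm_nonneg a, norm_nonneg b]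
  · nlinarith [norm_nonneg a, norm_nonneg b]

theorem norm_le_of_mem_surfH {p : ℂ × ℂ × ℂ × ℂ} (hp : p ∈ SurfH) {r : ℝ}
    (hr : ‖phi p‖ ≤ r) : ‖p‖ ≤ r ^ 2 + 3 * r + 5 := by
  obtain ⟨w, u, v, t⟩ := p
  simp only [phi, Prod.norm_mk, max_le_iff, norm_pow] at hr
  obtain ⟨-, hu, hv, ht⟩ := hr
  have hr0 : 0 ≤ r := (norm_nonneg t).trans ht
  have hw_sq : w ^ 2 = (u ^ 2 + v ^ 2 - t ^ 2 + 4) + u * v * w := by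
    simp only [SurfH, Set.mem_ofPred_eq] at hp
    linear_combination -hp
  have hconst : ‖u ^ 2 + v ^ 2 - t ^ 2 + 4‖ ≤ r + r + r ^ 2 + 4 :=
    calc ‖u ^ 2 + v ^ 2 - t ^ 2 + 4‖ ≤ ‖u‖ ^ 2 + ‖v‖ ^ 2 + ‖t‖ ^ 2 + ‖(4 : ℂ)‖ := by
          grw [norm_add_le, norm_sub_le, norm_add_le]; simp only [norm_pow, le_refl]
      _ ≤ r + r + r ^ 2 + 4 := by
          gcongr; norm_num
  -- AM-GM: `‖uv‖ ≤ (‖u‖² + ‖v‖²) / 2`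
  have huv : ‖u * v‖ ≤ r := by
    rw [norm_mul]; nlinarith [sq_nonneg (‖u‖ - ‖v‖)]
  have hw : ‖w‖ ≤ 1 + (r + r + r ^ 2 + 4) + r :=
    (norm_le_of_sq_eq_add_mul hw_sq).trans (by gcongr)
  simp only [Prod.norm_mk, max_le_iff]
  refine ⟨by linarith, ?_, ?_, by nlinarith⟩ <;> nlinarith [norm_nonneg u, norm_nonneg v]

theorem stmt_7_general (K : Set (ℂ × ℂ × ℂ × ℂ)) (hKc : IsCompact K) :
    IsCompact {p ∈ SurfH | phi p ∈ K} := by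
  obtain ⟨r, hr⟩ := hKc.isBounded.subset_closedBall 0
  refine Metric.isCompact_of_isClosed_isBounded
    (isClosed_surfH.inter (hKc.isClosed.preimage continuous_phi))
    ((Metric.isBounded_closedBall (x := 0) (r := r ^ 2 + 3 * r + 5)).subset ?_)
  rintro p ⟨hp, hpK⟩
  simpa using norm_le_of_mem_surfH hp (by simpa using hr hpK)

/-- The restriction of `φ` to `ℋ`, viewed as a map onto `𝒴'`, is proper: the preimage in `ℋ`
of every compact subset of `𝒴'` is compact. -/
theorem stmt_7 (K : Set (ℂ × ℂ × ℂ × ℂ)) (hK : K ⊆ SurfY') (hKc : IsCompact K) :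
    IsCompact {p ∈ SurfH | phi p ∈ K} :=
  stmt_7_general K hKc
end
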